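/- Let γ > 2 be a cardinal and suppose the poset P is LMD_γ: whenever {a} ∪ X ⊆ P with |X| < γ and a ∧ ⋁X exists in P, then ⋁_{x∈X}(a ∧ x) exists and equals a ∧ ⋁X. Let 𝒰_γ be the join-specification of all nonempty subsets of P of cardinality < γ with existing joins, and Φ = Γ_{𝒰_γ}. Then the complete lattice of Φ-closed sets (the 𝒰_γ-ideals of P) is a frame. -/
import Mathlib


universe u

variable {P : Type u} [PartialOrder P]

/-- The downward closure of a set in a poset. -/
def dcl (S : Set P) : Set P := {q | ∃ s ∈ S, q ≤ s}

/-- A join-specification: a collection of nonempty subsets each having a join,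
containing all singletons. -/
def IsJoinSpec (U : Set (Set P)) : Prop :=
  (∀ S ∈ U, ∃ j, IsLUB S j) ∧ (∀ p : P, {p} ∈ U) ∧ ∅ ∉ U

/-- A `U`-ideal: a down-set closed under joins of members of `U` contained in it. -/
def IsUIdeal (U : Set (Set P)) (I : Set P) : Prop :=
  IsLowerSet I ∧ ∀ S ∈ U, S ⊆ I → ∀ j, IsLUB S j → j ∈ I

/-- The smallest `U`-ideal containing `S`. -/
def GammaU (U : Set (Set P)) (S : Set P) : Set P :=
  ⋂₀ {I | IsUIdeal U I ∧ S ⊆ I}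

/-- A standard closure operator on the powerset of a poset. -/
def IsStdClosure (Γ : Set P → Set P) : Prop :=
  (∀ S, S ⊆ Γ S) ∧ (∀ S T, S ⊆ T → Γ S ⊆ Γ T) ∧ (∀ S, Γ (Γ S) = Γ S) ∧
  (∀ p : P, Γ {p} = {q | q ≤ p})

/-- The join-specification induced by a standard closure operator. -/
def UGamma (Γ : Set P → Set P) : Set (Set P) :=
  {S | (∃ j, IsLUB S j) ∧ ∀ C, Γ C = C → S ⊆ C → ∀ j, IsLUB S j → j ∈ C}

/-- The join-specification of all nonempty subsets of cardinality `< γ` with existing joins. -/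
def gammaSpec (P : Type u) [PartialOrder P] (γ : Cardinal.{u}) : Set (Set P) :=
  {S | S.Nonempty ∧ Cardinal.mk S < γ ∧ ∃ j, IsLUB S j}

lemma gammaU_isUIdeal (U : Set (Set P)) (S : Set P) : IsUIdeal U (GammaU U S) := by
  constructor
  · intro a b hba ha J hJ
    exact hJ.1.1 hba (ha J hJ)
  · intro T hT hTsub j hj J hJ
    exact hJ.1.2 T hT (fun x hx => hTsub hx J hJ) j hj

lemma subset_gammaU (U : Set (Set P)) (S : Set P) : S ⊆ GammaU U S :=
  fun x hx J hJ => hJ.2 hx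

lemma gammaU_le (U : Set (Set P)) {S J : Set P} (hJ : IsUIdeal U J) (h : S ⊆ J) :
    GammaU U S ⊆ J := fun x hx => hx J ⟨hJ, h⟩

lemma gammaU_mono (U : Set (Set P)) {S T : Set P} (h : S ⊆ T) :
    GammaU U S ⊆ GammaU U T :=
  gammaU_le U (gammaU_isUIdeal U T) (h.trans (subset_gammaU U T))

theorem LMD_gamma_implies_frame (γ : Cardinal.{u}) (hγ : 2 < γ)
    (hLMD : ∀ (a : P) (X : Set P), Cardinal.mk X < γ →
      ∀ jX, IsLUB X jX → ∀ m, IsGLB ({a, jX} : Set P) m →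
        (∀ x ∈ X, ∃ y, IsGLB ({a, x} : Set P) y) ∧
        IsLUB {y | ∃ x ∈ X, IsGLB ({a, x} : Set P) y} m) :
    ∀ I : Set P, GammaU (gammaSpec P γ) I = I →
      ∀ 𝒦 : Set (Set P), (∀ K ∈ 𝒦, GammaU (gammaSpec P γ) K = K) →
        I ∩ GammaU (gammaSpec P γ) (⋃₀ 𝒦) = GammaU (gammaSpec P γ) (⋃ K ∈ 𝒦, I ∩ K) := by

  intro I hI 𝒦 h𝒦
  set U := gammaSpec P γ with hU
  set R := GammaU U (⋃ K ∈ 𝒦, I ∩ K) with hR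
  have hRideal : IsUIdeal U R := gammaU_isUIdeal U _
  -- the auxiliary set
  set C : Set P := {p | ∀ a ∈ I, ∀ m, IsGLB ({a, p} : Set P) m → m ∈ R} with hC
  have hIlower : IsLowerSet I := by
    rw [← hI]; exact (gammaU_isUIdeal U I).1
  -- C is a U-ideal
  have hClower : IsLowerSet C := by
    intro p q hqp hp a ha m hm
    have hmq : m ≤ q := hm.1 (by simp)
    have hma : m ≤ a := hm.1 (by simp)
    have hmI : m ∈ I := hIlower hma ha
    exact hp m hmI m ⟨by rintro x (rfl | rfl) <;> [exact le_rfl; exact hmq.trans hqp],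
      fun x hx => hx (by simp)⟩
  have hCclosed : ∀ S ∈ U, S ⊆ C → ∀ j, IsLUB S j → j ∈ C := by
    intro S hS hSC j hj a ha m hm
    obtain ⟨hSne, hScard, -⟩ := hS
    obtain ⟨hex, hlub⟩ := hLMD a S hScard j hj m hm
    set Y : Set P := {y | ∃ x ∈ S, IsGLB ({a, x} : Set P) y} with hY
    -- Y ⊆ R
    have hYR : Y ⊆ R := by
      rintro y ⟨x, hx, hy⟩
      exact hSC hx a ha y hy
    -- Y ∈ U
    choose f hf using hex
    have hYimg : Y = (fun x : S => f x x.2) '' Set.univ := by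
      ext y
      constructor
      · rintro ⟨x, hx, hy⟩
        exact ⟨⟨x, hx⟩, trivial, (hy.unique (hf x hx)).symm⟩
      · rintro ⟨⟨x, hx⟩, -, rfl⟩
        exact ⟨x, hx, hf x hx⟩
    have hYU : Y ∈ U := by
      refine ⟨?_, ?_, m, hlub⟩
      · obtain ⟨x, hx⟩ := hSne
        exact ⟨f x hx, x, hx, hf x hx⟩
      · calc Cardinal.mk Y ≤ Cardinal.mk S := by
              rw [hYimg]
              exact (Cardinal.mk_image_le).trans (by rw [Cardinal.mk_univ])
            _ < γ := hScard
    exact hRideal.2 Y hYU hYR m hlub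
  have hCideal : IsUIdeal U C := ⟨hClower, hCclosed⟩
  -- ⋃₀ 𝒦 ⊆ C
  have hKC : ⋃₀ 𝒦 ⊆ C := by
    rintro p ⟨K, hK, hpK⟩ a ha m hm
    have hKlower : IsLowerSet K := by
      rw [← h𝒦 K hK]; exact (gammaU_isUIdeal U K).1
    have hma : m ≤ a := hm.1 (by simp)
    have hmp : m ≤ p := hm.1 (by simp)
    have : m ∈ ⋃ K ∈ 𝒦, I ∩ K :=
      Set.mem_biUnion hK ⟨hIlower hma ha, hKlower hmp hpK⟩
    exact subset_gammaU U _ this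
  apply Set.Subset.antisymm
  · rintro p ⟨hpI, hpG⟩
    have hpC : p ∈ C := gammaU_le U hCideal hKC hpG
    have : IsGLB ({p, p} : Set P) p :=
      ⟨by rintro x (rfl | rfl) <;> exact le_rfl, fun x hx => hx (by simp)⟩
    exact hpC p hpI p this
  · apply Set.subset_inter
    · have h1 : (⋃ K ∈ 𝒦, I ∩ K) ⊆ I := by
        intro x hx
        obtain ⟨K, -, hxI, -⟩ := Set.mem_iUnion₂.mp hx
        exact hxI
      calc R ⊆ GammaU U I := gammaU_mono U h1
        _ = I := hI
    · apply gammaU_mono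
      intro x hx
      obtain ⟨K, hK, -, hxK⟩ := Set.mem_iUnion₂.mp hx
      exact ⟨K, hK, hxK⟩
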